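/- For any two lattices L, M of V, π·m₊(L,M) ⊆ m₋(L,M). -/

import Mathlib

open scoped Pointwise

variable {R K V : Type*} [CommRing R] [IsDomain R] [IsDiscreteValuationRing R]
  [Field K] [Algebra R K] [IsFractionRing R K]
  [AddCommGroup V] [Module K V] [Module R V] [IsScalarTower R K V]
  [FiniteDimensional K V]

/-- A lattice in `V` is a finitely generated `R`-submodule spanning `V` over `K`. -/
def IsLattice (K : Type*) [Field K] [Algebra R K] [Module K V] (L : Submodule R V) : Prop :=
  L.FG ∧ Submodule.span K (L : Set V) = ⊤

/-- `πⁿ L`, for `n ∈ ℤ` (via the embedding of `π` in `K`). -/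
noncomputable def latTwist (π : R) (n : ℤ) (L : Submodule R V) : Submodule R V :=
  ((algebraMap R K π) ^ n) • L

/-- The lower middle `m₋(L,M) = ∑ₙ (πⁿL ∩ π⁻ⁿM)`. -/
noncomputable def lowerMiddle (π : R) (L M : Submodule R V) : Submodule R V :=
  ⨆ n : ℤ, (latTwist (K := K) π n L ⊓ latTwist (K := K) π (-n) M)

/-- The upper middle `m₊(L,M) = ⋂ₙ (πⁿL + π⁻ⁿM)`. -/
noncomputable def upperMiddle (π : R) (L M : Submodule R V) : Submodule R V :=
  ⨅ n : ℤ, (latTwist (K := K) π n L ⊔ latTwist (K := K) π (-n) M)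

/-!
Write `x ∈ m₊(L,M)` as `x = aₙ + bₙ` with `aₙ ∈ πⁿL`, `bₙ ∈ π⁻ⁿM` for every `n ∈ ℤ`. Consecutive
differences `aₙ - aₙ₊₁ = bₙ₊₁ - bₙ` lie in `πⁿL ∩ π⁻⁽ⁿ⁺¹⁾M`, and since `L` and `M` span `V` the
end terms `bₚ` (where `x ∈ πᵖL`) and `a_q` (where `x ∈ π⁻ᵠM`) lie in such intersections too, so
telescoping gives `m₊(L,M) ⊆ ∑ₙ (πⁿL ∩ π⁻⁽ⁿ⁺¹⁾M)`. Multiplying by `π` maps each summand into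
`πⁿ⁺¹L ∩ π⁻ⁿM ⊆ πⁿ⁺¹L ∩ π⁻⁽ⁿ⁺¹⁾M`, a summand of `m₋(L,M)`.
-/

theorem sub_mem_of_forall_sub_succ_mem {G S : Type*} [AddCommGroup G] [SetLike S G]
    [AddSubgroupClass S G] (s : S) (f : ℤ → G) (h : ∀ n, f n - f (n + 1) ∈ s) (m n : ℤ) :
    f m - f n ∈ s := by
  have from_zero : ∀ n, f 0 - f n ∈ s := by
    intro n
    induction n using Int.induction_on with
    | zero => simp
    | succ k ih => simpa only [sub_add_sub_cancel] using add_mem ih (h k)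
    | pred k ih =>
      simpa only [sub_add_cancel, sub_sub_sub_cancel_right] using sub_mem ih (h (-k - 1))
  simpa only [sub_sub_sub_cancel_left] using sub_mem (from_zero n) (from_zero m)

theorem Submodule.iInf_sup_le_iSup_inf_succ {A N : Type*} [Ring A] [AddCommGroup N] [Module A N]
    {F G : ℤ → Submodule A N} (hF : Antitone F) (hG : Monotone G)
    (hF_exh : ∀ x, ∃ p, x ∈ F p) (hG_exh : ∀ x, ∃ q, x ∈ G q) :
    ⨅ n, (F n ⊔ G n) ≤ ⨆ n, (F n ⊓ G (n + 1)) := by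
  intro x hx
  choose a ha b hb hab using fun n ↦ Submodule.mem_sup.mp (Submodule.mem_iInf _ |>.mp hx n)
  have mem_term {y : N} (n : ℤ) (hF : y ∈ F n) (hG : y ∈ G (n + 1)) :
      y ∈ ⨆ n, (F n ⊓ G (n + 1)) :=
    Submodule.mem_iSup_of_mem n ⟨hF, hG⟩
  have step (n : ℤ) : a n - a (n + 1) ∈ ⨆ n, (F n ⊓ G (n + 1)) := by
    have hba : a n - a (n + 1) = b (n + 1) - b n := by
      rw [sub_eq_sub_iff_add_eq_add, hab n, add_comm, hab (n + 1)]
    refine mem_term n (sub_mem (ha n) (hF (by omega) (ha (n + 1)))) ?_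
    rw [hba]
    exact sub_mem (hb (n + 1)) (hG (by omega) (hb n))
  obtain ⟨p, hp⟩ := hF_exh x
  obtain ⟨q, hq⟩ := hG_exh x
  have hbp : b p ∈ ⨆ n, (F n ⊓ G (n + 1)) := by
    refine mem_term (p - 1) (hF (show p - 1 ≤ p by omega) ?_) (by simpa using hb p)
    rw [← add_sub_cancel_left (a p) (b p), hab p]
    exact sub_mem hp (ha p)
  have haq : a q ∈ ⨆ n, (F n ⊓ G (n + 1)) := by
    refine mem_term q (ha q) (hG (show q ≤ q + 1 by omega) ?_)
    rw [← add_sub_cancel_right (a q) (b q), hab q]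
    exact sub_mem hq (hb q)
  rw [← hab p, ← sub_add_cancel (a p) (a q)]
  exact add_mem (add_mem (sub_mem_of_forall_sub_succ_mem _ a step p q) haq) hbp

theorem Submodule.algebraMap_smul_le {A F W : Type*} [CommSemiring A] [Semiring F] [Algebra A F]
    [AddCommMonoid W] [Module F W] [Module A W] [IsScalarTower A F W] [SMulCommClass F A W]
    (a : A) (L : Submodule A W) : algebraMap A F a • L ≤ L := by
  intro x hx
  obtain ⟨y, hy, rfl⟩ := (Submodule.mem_smul_pointwise_iff_exists _ _ _).mp hx
  rw [algebraMap_smul]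
  exact L.smul_mem a hy

section latTwist

omit [IsDomain R] [IsDiscreteValuationRing R] [FiniteDimensional K V]

variable {π : R}

theorem smul_latTwist (hπ : π ≠ 0) (n : ℤ) (L : Submodule R V) :
    algebraMap R K π • latTwist (K := K) π n L = latTwist (K := K) π (n + 1) L := by
  have hπ' : algebraMap R K π ≠ 0 := (map_ne_zero_iff _ (IsFractionRing.injective R K)).mpr hπ
  rw [latTwist, latTwist, smul_smul, zpow_add_one₀ hπ', mul_comm]

theorem latTwist_antitone (hπ : π ≠ 0) (L : Submodule R V) :
    Antitone fun n ↦ latTwist (K := K) π n L :=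
  antitone_int_of_succ_le fun n ↦
    smul_latTwist (K := K) hπ n L ▸ Submodule.algebraMap_smul_le π _

theorem exists_mem_latTwist [IsDomain R] [IsDiscreteValuationRing R] (hπ : Irreducible π)
    {L : Submodule R V} (hL : Submodule.span K (L : Set V) = ⊤) (x : V) :
    ∃ n, x ∈ latTwist (K := K) π n L := by
  obtain ⟨y, hy, d, rfl⟩ := (IsLocalization.mem_span_iff (nonZeroDivisors R)).mp
    (hL ▸ Submodule.mem_top : x ∈ Submodule.span K (L : Set V))
  rw [Submodule.span_eq] at hy
  obtain ⟨k, u, hd⟩ := IsDiscreteValuationRing.eq_unit_mul_pow_irreducible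
    (nonZeroDivisors.ne_zero d.2) hπ
  refine ⟨-k, (Submodule.mem_smul_pointwise_iff_exists _ _ _).mpr
    ⟨(↑u⁻¹ : R) • y, L.smul_mem _ hy, ?_⟩⟩
  have hπ' : algebraMap R K π ≠ 0 :=
    (map_ne_zero_iff _ (IsFractionRing.injective R K)).mpr hπ.ne_zero
  rw [← algebraMap_smul K (↑u⁻¹ : R) y, smul_smul]
  congr 1
  have hu : algebraMap R K u ≠ 0 := (u.isUnit.map _).ne_zero
  rw [eq_comm, IsLocalization.mk'_eq_iff_eq_mul, hd, map_one, map_mul, map_pow, zpow_neg,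
    zpow_natCast, map_units_inv]
  field_simp

theorem smul_iSup_inf_latTwist_le_lowerMiddle (hπ : π ≠ 0) (L M : Submodule R V) :
    algebraMap R K π • ⨆ n : ℤ, (latTwist (K := K) π n L ⊓ latTwist (K := K) π (-(n + 1)) M) ≤
      lowerMiddle (K := K) π L M := by
  rw [Submodule.smul_iSup']
  refine iSup_le fun n ↦ ?_
  calc algebraMap R K π • (latTwist (K := K) π n L ⊓ latTwist (K := K) π (-(n + 1)) M)
      ≤ latTwist (K := K) π (n + 1) L ⊓ latTwist (K := K) π (-n) M := by
        rw [← neg_add_cancel_right (-n) 1, ← neg_add, ← smul_latTwist hπ, ← smul_latTwist hπ]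
        exact smul_inf_le _ _ _
    _ ≤ latTwist (K := K) π (n + 1) L ⊓ latTwist (K := K) π (-(n + 1)) M :=
        inf_le_inf_left _ (latTwist_antitone hπ M (by omega))
    _ ≤ lowerMiddle (K := K) π L M :=
        le_iSup (fun n ↦ latTwist (K := K) π n L ⊓ latTwist (K := K) π (-n) M) (n + 1)

end latTwist

/-- `π·m₊(L,M) ⊆ m₋(L,M)`. -/
theorem smul_upperMiddle_le_lowerMiddle (π : R) (hπ : Irreducible π)
    (L M : Submodule R V) (hL : IsLattice K L) (hM : IsLattice K M) :
    (algebraMap R K π) • upperMiddle (K := K) π L M ≤ lowerMiddle (K := K) π L M := by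
  have hπ₀ := hπ.ne_zero
  have hM_exh (x : V) : ∃ n, x ∈ latTwist (K := K) π (-n) M := by
    obtain ⟨n, hn⟩ := exists_mem_latTwist hπ hM.2 x
    exact ⟨-n, by rwa [neg_neg]⟩
  calc (algebraMap R K π) • upperMiddle (K := K) π L M
      ≤ algebraMap R K π •
          ⨆ n : ℤ, (latTwist (K := K) π n L ⊓ latTwist (K := K) π (-(n + 1)) M) :=
        smul_le_smul_left _ <| Submodule.iInf_sup_le_iSup_inf_succ (latTwist_antitone hπ₀ L)
          (fun _ _ h ↦ latTwist_antitone hπ₀ M (neg_le_neg h)) (exists_mem_latTwist hπ hL.2)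
          hM_exh
    _ ≤ lowerMiddle (K := K) π L M := smul_iSup_inf_latTwist_le_lowerMiddle hπ₀ L M
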